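/- Fix x⁰ ∈ R^n and index i. Define R̲_i(x) = 1 − (∑_{j≠i} exp(xⱼ)) · exp(−LSE(x⁰) − ∇LSE(x⁰)·(x − x⁰)). Then the softmax component R_i(x) = exp(x_i)/∑ⱼ exp(xⱼ) satisfies R_i(x) ≥ R̲_i(x) for all x ∈ R^n. -/

import Mathlib

/-! The tail `∑_{j ≠ i} exp (x j)` enters the softmax component as `1 - tail / ∑ⱼ exp (x j)`, so it
suffices to bound `1 / ∑ⱼ exp (x j) = exp (-LSE x)` from above. This is the tangent-line bound
`LSE x ≥ LSE x₀ + ∇LSE(x₀) · (x - x₀)` for the convex function `LSE`, which here follows from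
Jensen's inequality for `exp` with the softmax weights of `x₀`. -/

open Finset Real

variable {ι : Type*} [Fintype ι]

theorem sum_exp_div_sum_exp_eq_one [Nonempty ι] (x : ι → ℝ) :
    ∑ j, exp (x j) / ∑ k, exp (x k) = 1 := by
  rw [← sum_div, div_self (sum_pos (fun j _ => exp_pos (x j)) univ_nonempty).ne']

theorem log_sum_exp_add_inner_softmax_le [Nonempty ι] (x₀ x : ι → ℝ) :
    log (∑ j, exp (x₀ j)) + ∑ j, (exp (x₀ j) / ∑ k, exp (x₀ k)) * (x j - x₀ j) ≤
      log (∑ j, exp (x j)) := by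
  set S₀ := ∑ k, exp (x₀ k)
  have hS₀ : 0 < S₀ := sum_pos (fun j _ => exp_pos (x₀ j)) univ_nonempty
  have jensen : exp (∑ j, (exp (x₀ j) / S₀) * (x j - x₀ j)) ≤
      ∑ j, (exp (x₀ j) / S₀) * exp (x j - x₀ j) := by
    simpa only [smul_eq_mul] using convexOn_exp.map_sum_le
      (fun j _ => div_nonneg (exp_pos (x₀ j)).le hS₀.le) (sum_exp_div_sum_exp_eq_one x₀)
      (fun j _ => Set.mem_univ (x j - x₀ j))
  have reweight : S₀ * ∑ j, (exp (x₀ j) / S₀) * exp (x j - x₀ j) = ∑ j, exp (x j) := by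
    rw [mul_sum]
    refine sum_congr rfl fun j _ => ?_
    rw [exp_sub]
    field_simp
  rw [← exp_le_exp, exp_add, exp_log hS₀,
    exp_log (sum_pos (fun j _ => exp_pos (x j)) univ_nonempty), ← reweight]
  exact mul_le_mul_of_nonneg_left jensen hS₀.le

theorem exp_div_sum_exp_eq_one_sub [DecidableEq ι] (x : ι → ℝ) (i : ι) :
    exp (x i) / ∑ j, exp (x j) = 1 - (∑ j ∈ univ.erase i, exp (x j)) / ∑ j, exp (x j) := by
  have hS : 0 < ∑ j, exp (x j) := sum_pos (fun j _ => exp_pos (x j)) ⟨i, mem_univ i⟩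
  rw [eq_sub_iff_add_eq, ← add_div, add_sum_erase univ (fun j => exp (x j)) (mem_univ i), div_self hS.ne']

theorem softmax_lower_bound (n : ℕ) (x₀ : Fin n → ℝ) (i : Fin n) (x : Fin n → ℝ) :
    Real.exp (x i) / ∑ j, Real.exp (x j) ≥
      1 - (∑ j ∈ Finset.univ.erase i, Real.exp (x j)) *
        Real.exp (- Real.log (∑ j, Real.exp (x₀ j))
          - ∑ j, (Real.exp (x₀ j) / ∑ k, Real.exp (x₀ k)) * (x j - x₀ j)) := by
  have : Nonempty (Fin n) := ⟨i⟩
  have inv_sum_le : (∑ j, exp (x j))⁻¹ ≤ exp (-log (∑ j, exp (x₀ j))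
      - ∑ j, (exp (x₀ j) / ∑ k, exp (x₀ k)) * (x j - x₀ j)) := by
    rw [← exp_log (sum_pos (fun j _ => exp_pos (x j)) univ_nonempty), ← exp_neg, exp_le_exp]
    linarith [log_sum_exp_add_inner_softmax_le x₀ x]
  rw [ge_iff_le, exp_div_sum_exp_eq_one_sub, div_eq_mul_inv]
  exact sub_le_sub_left
    (mul_le_mul_of_nonneg_left inv_sum_le (sum_nonneg fun j _ => (exp_pos (x j)).le)) 1
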